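/- Fix u̲ ∈ [0,1], v̲ ∈ [0,1], and R^m defined as max_{(u,v)∈[u̲,1]×[v̲,1]} min_{p∈[0,1]} max{(1−p)v, γ(u,p)(1−v)} with γ(u,p) = min{q∈[0,1] : u̲ + q(u−u̲) ≥ pu}. Then R^m equals (1−u̲)(2−u̲−2√(1−u̲))/u̲² if 0 < u̲ and v̲ < (1−√(1−u̲))/u̲, and equals (1−u̲)(1−v̲)v̲/(1−u̲·v̲) if 0 < u̲ and v̲ ≥ (1−√(1−u̲))/u̲. -/
import Mathlib

/-- γ(u,p) = min{q ∈ [0,1] : u̲ + q(u − u̲) ≥ p·u}. -/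
noncomputable def gammaFn (ul u p : ℝ) : ℝ :=
  sInf {q : ℝ | q ∈ Set.Icc (0:ℝ) 1 ∧ p * u ≤ ul + q * (u - ul)}

/-- R^m = max_{(u,v)} min_{p∈[0,1]} max{(1−p)v, γ(u,p)(1−v)}. -/
noncomputable def RmVal (ul vl : ℝ) : ℝ :=
  sSup {x : ℝ | ∃ u ∈ Set.Icc ul 1, ∃ v ∈ Set.Icc vl 1,
    x = sInf {y : ℝ | ∃ p ∈ Set.Icc (0:ℝ) 1,
      y = max ((1 - p) * v) (gammaFn ul u p * (1 - v))}}

lemma gamma_eq {ul u p : ℝ} (h0 : 0 ≤ ul) (hu : ul < u) (hp1 : p ≤ 1) :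
    gammaFn ul u p = max 0 ((p * u - ul) / (u - ul)) := by
  have hd : 0 < u - ul := by linarith
  have hc1 : (p * u - ul) / (u - ul) ≤ 1 := by
    rw [div_le_one hd]; nlinarith
  have hset : {q : ℝ | q ∈ Set.Icc (0:ℝ) 1 ∧ p * u ≤ ul + q * (u - ul)}
      = Set.Icc (max 0 ((p * u - ul) / (u - ul))) 1 := by
    ext q
    simp only [Set.mem_setOf_eq, Set.mem_Icc, max_le_iff]
    constructor
    · rintro ⟨⟨hq0, hq1⟩, hq⟩
      exact ⟨⟨hq0, by rw [div_le_iff₀ hd]; linarith⟩, hq1⟩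
    · rintro ⟨⟨hq0, hq⟩, hq1⟩
      rw [div_le_iff₀ hd] at hq
      exact ⟨⟨hq0, hq1⟩, by linarith⟩
  rw [gammaFn, hset, csInf_Icc (max_le zero_le_one hc1)]

lemma gamma_self {ul p : ℝ} (h0 : 0 ≤ ul) (hp1 : p ≤ 1) : gammaFn ul ul p = 0 := by
  have hset : {q : ℝ | q ∈ Set.Icc (0:ℝ) 1 ∧ p * ul ≤ ul + q * (ul - ul)}
      = Set.Icc (0:ℝ) 1 := by
    ext q
    simp only [Set.mem_setOf_eq, sub_self, mul_zero, add_zero]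
    exact ⟨fun h => h.1, fun h => ⟨h, by nlinarith⟩⟩
  rw [gammaFn, hset, csInf_Icc zero_le_one]

def innerSet (ul u v : ℝ) : Set ℝ :=
  {y : ℝ | ∃ p ∈ Set.Icc (0:ℝ) 1, y = max ((1 - p) * v) (gammaFn ul u p * (1 - v))}

lemma inner_nonneg {ul u v : ℝ} (hv : 0 ≤ v) : ∀ y ∈ innerSet ul u v, (0:ℝ) ≤ y := by
  rintro y ⟨p, ⟨hp0, hp1⟩, rfl⟩
  exact le_trans (mul_nonneg (by linarith) hv) (le_max_left _ _)

lemma inner_v1 (ul u : ℝ) : sInf (innerSet ul u 1) = 0 := by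
  have hmem : (0:ℝ) ∈ innerSet ul u 1 :=
    ⟨1, ⟨zero_le_one, le_refl 1⟩, by norm_num⟩
  have hlb : ∀ y ∈ innerSet ul u 1, (0:ℝ) ≤ y := by
    rintro y ⟨p, ⟨hp0, hp1⟩, rfl⟩
    calc (0:ℝ) = gammaFn ul u p * (1 - 1) := by ring
    _ ≤ _ := le_max_right _ _
  exact le_antisymm (csInf_le ⟨0, hlb⟩ hmem) (le_csInf ⟨0, hmem⟩ hlb)

lemma inner_self {ul v : ℝ} (h0 : 0 ≤ ul) (hv : 0 ≤ v) :
    sInf (innerSet ul ul v) = 0 := by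
  have hmem : (0:ℝ) ∈ innerSet ul ul v :=
    ⟨1, ⟨zero_le_one, le_refl 1⟩, by rw [gamma_self h0 le_rfl]; norm_num⟩
  exact le_antisymm (csInf_le ⟨0, inner_nonneg hv⟩ hmem)
    (le_csInf ⟨0, hmem⟩ (inner_nonneg hv))

lemma inner_inf_eq {ul u v : ℝ} (hul : 0 < ul) (hu : ul < u) (hu1 : u ≤ 1)
    (hv0 : 0 ≤ v) (hv1 : v < 1) :
    sInf (innerSet ul u v) = v * (1 - v) * (u - ul) / (v * (u - ul) + u * (1 - v)) := by
  have hd : 0 < u - ul := by linarith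
  have hu0 : 0 < u := by linarith
  have hD : 0 < v * (u - ul) + u * (1 - v) := by nlinarith
  set D := v * (u - ul) + u * (1 - v) with hD_def
  set m := v * (1 - v) * (u - ul) / D with hm_def
  set p := (v * (u - ul) + ul * (1 - v)) / D with hp_def
  have hp0 : 0 ≤ p := div_nonneg (by nlinarith) hD.le
  have hp1 : p ≤ 1 := (div_le_one hD).2 (by nlinarith)
  have h1 : (1 - p) * v = m := by
    rw [hm_def, hp_def]
    field_simp
    ring
  have hpu : 0 ≤ p * u - ul := by
    rw [hp_def, div_mul_eq_mul_div, sub_nonneg, le_div_iff₀ hD, hD_def]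
    nlinarith [mul_nonneg hv0 (sq_nonneg (u - ul))]
  have h2 : (p * u - ul) / (u - ul) * (1 - v) = m := by
    rw [hm_def, hp_def, hD_def]
    have hD' : v * (u - ul) + u * (1 - v) ≠ 0 := by nlinarith
    field_simp
    ring
  have hgp : gammaFn ul u p = (p * u - ul) / (u - ul) := by
    rw [gamma_eq hul.le hu hp1, max_eq_right (div_nonneg hpu hd.le)]
  have hmem : m ∈ innerSet ul u v := by
    refine ⟨p, ⟨hp0, hp1⟩, ?_⟩
    rw [h1, hgp, h2, max_self]
  have hlb : ∀ y ∈ innerSet ul u v, m ≤ y := by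
    rintro y ⟨q, ⟨hq0, hq1⟩, rfl⟩
    rcases le_total q p with h | h
    · refine le_trans ?_ (le_max_left _ _)
      rw [← h1]
      exact mul_le_mul_of_nonneg_right (by linarith) hv0
    · refine le_trans ?_ (le_max_right _ _)
      rw [← h2]
      refine mul_le_mul_of_nonneg_right ?_ (by linarith)
      rw [gamma_eq hul.le hu hq1]
      refine le_max_of_le_right (div_le_div_of_nonneg_right ?_ hd.le)
      · nlinarith
  exact le_antisymm (csInf_le ⟨m, hlb⟩ hmem) (le_csInf ⟨m, hmem⟩ hlb)

lemma m_le_g {ul u v : ℝ} (hul0 : 0 < ul) (hu : ul < u) (hu1 : u ≤ 1)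
    (hv0 : 0 ≤ v) (hv1 : v < 1) :
    v * (1 - v) * (u - ul) / (v * (u - ul) + u * (1 - v))
      ≤ (1 - ul) * v * (1 - v) / (1 - ul * v) := by
  have hD : 0 < v * (u - ul) + u * (1 - v) := by nlinarith
  have hE : 0 < 1 - ul * v := by nlinarith
  rw [div_le_div_iff₀ hD hE]
  nlinarith [mul_nonneg (mul_nonneg (mul_nonneg hul0.le hv0)
    (by linarith : (0:ℝ) ≤ 1 - u)) (sq_nonneg (1 - v))]

lemma g_le_case1 {ul v s : ℝ} (hul0 : 0 < ul) (hul1 : ul < 1) (hv1 : v ≤ 1)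
    (hs2 : s ^ 2 = 1 - ul) :
    (1 - ul) * v * (1 - v) / (1 - ul * v) ≤ (1 - ul) * (2 - ul - 2 * s) / ul ^ 2 := by
  have hE : 0 < 1 - ul * v := by nlinarith
  rw [div_le_div_iff₀ hE (pow_pos hul0 2)]
  have key : (1 - ul) * (2 - ul - 2 * s) * (1 - ul * v) - (1 - ul) * v * (1 - v) * ul ^ 2
      = (1 - ul) * (ul * v - 1 + s) ^ 2 := by linear_combination (ul - 1) * hs2
  nlinarith [mul_nonneg (by linarith : (0:ℝ) ≤ 1 - ul) (sq_nonneg (ul * v - 1 + s))]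

lemma g_le_case2 {ul v vl s : ℝ} (hul0 : 0 < ul) (hul1 : ul < 1)
    (hvvl : vl ≤ v) (hv1 : v ≤ 1) (hs0 : 0 ≤ s) (hs2 : s ^ 2 = 1 - ul)
    (hlower : 1 - s ≤ ul * vl) :
    (1 - ul) * v * (1 - v) / (1 - ul * v) ≤ (1 - ul) * (1 - vl) * vl / (1 - ul * vl) := by
  have hvl1 : vl ≤ 1 := le_trans hvvl hv1
  have hE1 : 0 < 1 - ul * v := by nlinarith
  have hE2 : 0 < 1 - ul * vl := by nlinarith
  have h1 : (0:ℝ) ≤ ul ^ 2 * ((v - vl) * (1 - ul * vl)) :=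
    mul_nonneg (sq_nonneg ul) (mul_nonneg (by linarith) hE2.le)
  have h2 : (0:ℝ) ≤ ul * ((ul * vl - 1 + s) * (1 + s - ul * vl)) :=
    mul_nonneg hul0.le (mul_nonneg (by linarith) (by nlinarith))
  have hs2' : ul * s ^ 2 = ul * (1 - ul) := by rw [hs2]
  have hq : (0:ℝ) ≤ ul ^ 2 * (v + vl - ul * v * vl - 1) := by linarith [h1, h2, hs2']
  have hkey : 1 ≤ v + vl - ul * v * vl := by nlinarith [hq, pow_pos hul0 2]
  rw [div_le_div_iff₀ hE1 hE2]
  have h3 : (0:ℝ) ≤ (1 - ul) * ((v - vl) * (v + vl - 1 - ul * v * vl)) :=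
    mul_nonneg (by linarith) (mul_nonneg (by linarith) (by linarith))
  linarith [h3]

/-- generic upper bound for the outer set -/
lemma sup_le_aux {ul vl R : ℝ} (hul0 : 0 < ul) (hul1 : ul < 1) (hvl0 : 0 ≤ vl)
    (hR0 : 0 ≤ R)
    (hg : ∀ v, vl ≤ v → v < 1 → (1 - ul) * v * (1 - v) / (1 - ul * v) ≤ R) :
    ∀ x ∈ {x : ℝ | ∃ u ∈ Set.Icc ul 1, ∃ v ∈ Set.Icc vl 1,
      x = sInf (innerSet ul u v)}, x ≤ R := by
  rintro x ⟨u, ⟨huu, hu1⟩, v, ⟨hvv, hv1⟩, rfl⟩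
  have hv0 : 0 ≤ v := le_trans hvl0 hvv
  rcases eq_or_lt_of_le hv1 with hveq | hvlt
  · rw [hveq, inner_v1]; exact hR0
  · rcases eq_or_lt_of_le huu with hueq | hult
    · rw [← hueq, inner_self hul0.le hv0]; exact hR0
    · calc sInf (innerSet ul u v)
          = v * (1 - v) * (u - ul) / (v * (u - ul) + u * (1 - v)) :=
            inner_inf_eq hul0 hult hu1 hv0 hvlt
        _ ≤ (1 - ul) * v * (1 - v) / (1 - ul * v) := m_le_g hul0 hult hu1 hv0 hvlt
        _ ≤ R := hg v hvv hvlt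

/-- explicit closed-form expression for R^m. -/
theorem stmt19 (ul vl : ℝ) (hul : ul ∈ Set.Ioc (0:ℝ) 1) (hvl : vl ∈ Set.Icc (0:ℝ) 1) :
    (vl < (1 - Real.sqrt (1 - ul)) / ul →
      RmVal ul vl = (1 - ul) * (2 - ul - 2 * Real.sqrt (1 - ul)) / ul ^ 2) ∧
    ((1 - Real.sqrt (1 - ul)) / ul ≤ vl →
      RmVal ul vl = (1 - ul) * (1 - vl) * vl / (1 - ul * vl)) := by
  obtain ⟨hul0, hul1⟩ := hul
  obtain ⟨hvl0, hvl1⟩ := hvl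
  set s := Real.sqrt (1 - ul) with hs_def
  have hs0 : 0 ≤ s := Real.sqrt_nonneg _
  have hs2 : s ^ 2 = 1 - ul := Real.sq_sqrt (by linarith)
  have hOeq : RmVal ul vl = sSup {x : ℝ | ∃ u ∈ Set.Icc ul 1, ∃ v ∈ Set.Icc vl 1,
      x = sInf (innerSet ul u v)} := rfl
  rcases eq_or_lt_of_le hul1 with hule | hul_lt
  · -- ul = 1
    have hs_z : s = 0 := by nlinarith
    have hO1 : ∀ x ∈ {x : ℝ | ∃ u ∈ Set.Icc ul 1, ∃ v ∈ Set.Icc vl 1,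
        x = sInf (innerSet ul u v)}, x = 0 := by
      rintro x ⟨u, ⟨huu, hu1⟩, v, ⟨hvv, hv1⟩, rfl⟩
      have : u = ul := le_antisymm (by rw [hule]; exact hu1) huu
      rw [this, inner_self hul0.le (le_trans hvl0 hvv)]
    have hmem0 : (0:ℝ) ∈ {x : ℝ | ∃ u ∈ Set.Icc ul 1, ∃ v ∈ Set.Icc vl 1,
        x = sInf (innerSet ul u v)} :=
      ⟨ul, ⟨le_refl ul, hul1⟩, 1, ⟨hvl1, le_refl 1⟩, (inner_self hul0.le zero_le_one).symm⟩
    have hsup : RmVal ul vl = 0 := by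
      rw [hOeq]
      refine le_antisymm (csSup_le ⟨0, hmem0⟩ fun x hx => le_of_eq (hO1 x hx)) ?_
      exact le_csSup ⟨0, fun x hx => le_of_eq (hO1 x hx)⟩ hmem0
    constructor
    · intro _; rw [hsup, ← hule, hs_z]; norm_num
    · intro _; rw [hsup, ← hule]; norm_num
  · -- ul < 1
    have hs_pos : 0 < s := Real.sqrt_pos.2 (by linarith)
    have hs1 : s < 1 := by nlinarith
    set vstar := (1 - s) / ul with hvstar_def
    have hvstar0 : 0 ≤ vstar := div_nonneg (by linarith) hul0.le
    have hvstar1 : vstar < 1 := by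
      rw [hvstar_def, div_lt_one hul0]; nlinarith
    have huv : ul * vstar = 1 - s := by
      rw [hvstar_def]; field_simp
    constructor
    · -- case 1 : vl < vstar
      intro hcase
      have hR0 : (0:ℝ) ≤ (1 - ul) * (2 - ul - 2 * s) / ul ^ 2 :=
        div_nonneg (mul_nonneg (by linarith) (by nlinarith [sq_nonneg (1 - s)]))
          (sq_nonneg ul)
      have hub := sup_le_aux hul0 hul_lt hvl0 hR0
        (fun v _ hv1 => g_le_case1 hul0 hul_lt hv1.le hs2)
      have hDpos : 0 < vstar * (1 - ul) + 1 * (1 - vstar) := by nlinarith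
      have hval : sInf (innerSet ul 1 vstar) = (1 - ul) * (2 - ul - 2 * s) / ul ^ 2 := by
        rw [inner_inf_eq hul0 hul_lt le_rfl hvstar0 hvstar1,
          div_eq_div_iff hDpos.ne' (pow_pos hul0 2).ne']
        linear_combination ((1 - ul) * (1 - s - ul * vstar)) * huv + (1 - ul) * hs2
      have hmemR : (1 - ul) * (2 - ul - 2 * s) / ul ^ 2 ∈
          {x : ℝ | ∃ u ∈ Set.Icc ul 1, ∃ v ∈ Set.Icc vl 1,
            x = sInf (innerSet ul u v)} :=
        ⟨1, ⟨hul1, le_refl 1⟩, vstar, ⟨hcase.le, hvstar1.le⟩, hval.symm⟩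
      rw [hOeq]
      exact le_antisymm (csSup_le ⟨_, hmemR⟩ hub) (le_csSup ⟨_, hub⟩ hmemR)
    · -- case 2 : vstar ≤ vl
      intro hcase
      have hlower : 1 - s ≤ ul * vl := by
        rw [div_le_iff₀ hul0] at hcase; linarith [hcase]
      have hE2 : 0 < 1 - ul * vl := by nlinarith
      have hR0 : (0:ℝ) ≤ (1 - ul) * (1 - vl) * vl / (1 - ul * vl) :=
        div_nonneg (mul_nonneg (mul_nonneg (by linarith) (by linarith)) hvl0) hE2.le
      have hub := sup_le_aux hul0 hul_lt hvl0 hR0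
        (fun v hvv hv1 => g_le_case2 hul0 hul_lt hvv hv1.le hs0 hs2 hlower)
      rcases eq_or_lt_of_le hvl1 with hvle | hvl_lt
      · -- vl = 1
        have hR_z : (1 - ul) * (1 - vl) * vl / (1 - ul * vl) = 0 := by
          rw [hvle]; norm_num
        have hmemR : (1 - ul) * (1 - vl) * vl / (1 - ul * vl) ∈
            {x : ℝ | ∃ u ∈ Set.Icc ul 1, ∃ v ∈ Set.Icc vl 1,
              x = sInf (innerSet ul u v)} := by
          rw [hR_z]
          exact ⟨1, ⟨hul1, le_refl 1⟩, 1, ⟨hvl1, le_refl 1⟩, (inner_v1 ul 1).symm⟩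
        rw [hOeq]
        exact le_antisymm (csSup_le ⟨_, hmemR⟩ hub) (le_csSup ⟨_, hub⟩ hmemR)
      · -- vl < 1
        have hDpos : 0 < vl * (1 - ul) + 1 * (1 - vl) := by nlinarith
        have hval : sInf (innerSet ul 1 vl) = (1 - ul) * (1 - vl) * vl / (1 - ul * vl) := by
          rw [inner_inf_eq hul0 hul_lt le_rfl hvl0 hvl_lt,
            div_eq_div_iff hDpos.ne' hE2.ne']
          ring
        have hmemR : (1 - ul) * (1 - vl) * vl / (1 - ul * vl) ∈
            {x : ℝ | ∃ u ∈ Set.Icc ul 1, ∃ v ∈ Set.Icc vl 1,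
              x = sInf (innerSet ul u v)} :=
          ⟨1, ⟨hul1, le_refl 1⟩, vl, ⟨le_refl vl, hvl1⟩, hval.symm⟩
        rw [hOeq]
        exact le_antisymm (csSup_le ⟨_, hmemR⟩ hub) (le_csSup ⟨_, hub⟩ hmemR)
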